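/- arXiv:2603.06005 — 2 statements merged into one kernel-verified Lean document; each statement's English description precedes it below -/
import Mathlib

section
/- The linear map Θ₁^{(0,−1)} on W(0,−1) defined by Θ₁^{(0,−1)}(L_i) = I_i and Θ₁^{(0,−1)}(I_i) = 0 is a commuting linear map, and every commuting linear map of W(0,−1) is a linear combination of the identity map and Θ₁^{(0,−1)}. -/
private noncomputable def brR {W : Type*} [LieRing W] [LieAlgebra ℂ W] (z : W) :
    W →ₗ[ℂ] W where
  toFun y := ⁅y, z⁆
  map_add' a b := add_lie a b z
  map_smul' c a := smul_lie c a z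

@[simp] private lemma brR_apply {W : Type*} [LieRing W] [LieAlgebra ℂ W] (z y : W) :
    brR z y = ⁅y, z⁆ := rfl

private noncomputable def adL {W : Type*} [LieRing W] [LieAlgebra ℂ W] (z : W) :
    W →ₗ[ℂ] W where
  toFun y := ⁅z, y⁆
  map_add' a b := lie_add z a b
  map_smul' c a := lie_smul c z a

@[simp] private lemma adL_apply {W : Type*} [LieRing W] [LieAlgebra ℂ W] (z y : W) :
    adL z y = ⁅z, y⁆ := rfl

section reps

variable {W : Type*} [LieRing W] [LieAlgebra ℂ W] (B : Module.Basis (ℤ ⊕ ℤ) ℂ W)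

private lemma rep1
    (hLL : ∀ i j : ℤ, ⁅B (Sum.inl i), B (Sum.inl j)⁆ =
        ((i : ℂ) - j) • B (Sum.inl (i + j)))
    (hLI : ∀ i j : ℤ, ⁅B (Sum.inl i), B (Sum.inr j)⁆ =
        ((i : ℂ) - j) • B (Sum.inr (i + j)))
    (j m : ℤ) (y : W) :
    B.repr ⁅y, B (Sum.inl j)⁆ (Sum.inl m) =
      ((m : ℂ) - 2*j) * B.repr y (Sum.inl (m - j)) := by
  have hIL : ∀ k : ℤ, ⁅B (Sum.inr k), B (Sum.inl j)⁆ =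
      ((k : ℂ) - j) • B (Sum.inr (k + j)) := by
    intro k
    rw [← lie_skew, hLI j k, add_comm j k, ← neg_smul]
    congr 1
    ring
  have h : ((Finsupp.lapply (Sum.inl m) : ((ℤ ⊕ ℤ) →₀ ℂ) →ₗ[ℂ] ℂ).comp
      (B.repr.toLinearMap.comp (brR (B (Sum.inl j))))) =
      ((m : ℂ) - 2*j) • ((Finsupp.lapply (Sum.inl (m - j)) : ((ℤ ⊕ ℤ) →₀ ℂ) →ₗ[ℂ] ℂ).comp
        B.repr.toLinearMap) := by
    apply B.ext
    rintro (k | k) <;>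
      simp only [LinearMap.comp_apply, LinearMap.smul_apply, brR_apply,
        LinearEquiv.coe_toLinearMap, Finsupp.lapply_apply, hLL, hIL, map_smul,
        Module.Basis.repr_self, Finsupp.smul_single, smul_eq_mul, mul_one,
        Finsupp.single_apply, Sum.inl.injEq, Sum.inr.injEq, reduceCtorEq]
    · by_cases hk : k = m - j
      · subst hk
        rw [if_pos (by omega), if_pos rfl]
        push_cast
        ring
      · rw [if_neg (by omega), if_neg hk]
        simp
    · simp
  simpa using LinearMap.congr_fun h y

private lemma rep2
    (hLL : ∀ i j : ℤ, ⁅B (Sum.inl i), B (Sum.inl j)⁆ =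
        ((i : ℂ) - j) • B (Sum.inl (i + j)))
    (hLI : ∀ i j : ℤ, ⁅B (Sum.inl i), B (Sum.inr j)⁆ =
        ((i : ℂ) - j) • B (Sum.inr (i + j)))
    (j m : ℤ) (y : W) :
    B.repr ⁅y, B (Sum.inl j)⁆ (Sum.inr m) =
      ((m : ℂ) - 2*j) * B.repr y (Sum.inr (m - j)) := by
  have hIL : ∀ k : ℤ, ⁅B (Sum.inr k), B (Sum.inl j)⁆ =
      ((k : ℂ) - j) • B (Sum.inr (k + j)) := by
    intro k
    rw [← lie_skew, hLI j k, add_comm j k, ← neg_smul]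
    congr 1
    ring
  have h : ((Finsupp.lapply (Sum.inr m) : ((ℤ ⊕ ℤ) →₀ ℂ) →ₗ[ℂ] ℂ).comp
      (B.repr.toLinearMap.comp (brR (B (Sum.inl j))))) =
      ((m : ℂ) - 2*j) • ((Finsupp.lapply (Sum.inr (m - j)) : ((ℤ ⊕ ℤ) →₀ ℂ) →ₗ[ℂ] ℂ).comp
        B.repr.toLinearMap) := by
    apply B.ext
    rintro (k | k) <;>
      simp only [LinearMap.comp_apply, LinearMap.smul_apply, brR_apply,
        LinearEquiv.coe_toLinearMap, Finsupp.lapply_apply, hLL, hIL, map_smul,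
        Module.Basis.repr_self, Finsupp.smul_single, smul_eq_mul, mul_one,
        Finsupp.single_apply, Sum.inl.injEq, Sum.inr.injEq, reduceCtorEq]
    · simp
    · by_cases hk : k = m - j
      · subst hk
        rw [if_pos (by omega), if_pos rfl]
        push_cast
        ring
      · rw [if_neg (by omega), if_neg hk]
        simp
  simpa using LinearMap.congr_fun h y

private lemma rep3
    (hLI : ∀ i j : ℤ, ⁅B (Sum.inl i), B (Sum.inr j)⁆ =
        ((i : ℂ) - j) • B (Sum.inr (i + j)))
    (hII : ∀ i j : ℤ, ⁅B (Sum.inr i), B (Sum.inr j)⁆ = 0)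
    (j m : ℤ) (y : W) :
    B.repr ⁅y, B (Sum.inr j)⁆ (Sum.inl m) = 0 := by
  have h : ((Finsupp.lapply (Sum.inl m) : ((ℤ ⊕ ℤ) →₀ ℂ) →ₗ[ℂ] ℂ).comp
      (B.repr.toLinearMap.comp (brR (B (Sum.inr j))))) = 0 := by
    apply B.ext
    rintro (k | k) <;>
      simp [hLI, hII, Finsupp.single_apply]
  simpa using LinearMap.congr_fun h y

private lemma rep4
    (hLI : ∀ i j : ℤ, ⁅B (Sum.inl i), B (Sum.inr j)⁆ =
        ((i : ℂ) - j) • B (Sum.inr (i + j)))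
    (hII : ∀ i j : ℤ, ⁅B (Sum.inr i), B (Sum.inr j)⁆ = 0)
    (j m : ℤ) (y : W) :
    B.repr ⁅y, B (Sum.inr j)⁆ (Sum.inr m) =
      ((m : ℂ) - 2*j) * B.repr y (Sum.inl (m - j)) := by
  have h : ((Finsupp.lapply (Sum.inr m) : ((ℤ ⊕ ℤ) →₀ ℂ) →ₗ[ℂ] ℂ).comp
      (B.repr.toLinearMap.comp (brR (B (Sum.inr j))))) =
      ((m : ℂ) - 2*j) • ((Finsupp.lapply (Sum.inl (m - j)) : ((ℤ ⊕ ℤ) →₀ ℂ) →ₗ[ℂ] ℂ).comp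
        B.repr.toLinearMap) := by
    apply B.ext
    rintro (k | k) <;>
      simp only [LinearMap.comp_apply, LinearMap.smul_apply, brR_apply,
        LinearEquiv.coe_toLinearMap, Finsupp.lapply_apply, hLI, hII, map_smul, map_zero,
        Module.Basis.repr_self, Finsupp.smul_single, smul_eq_mul, mul_one, Finsupp.coe_zero,
        Pi.zero_apply, Finsupp.single_apply, Sum.inl.injEq, Sum.inr.injEq, reduceCtorEq]
    · by_cases hk : k = m - j
      · subst hk
        rw [if_pos (by omega), if_pos rfl]
        push_cast
        ring
      · rw [if_neg (by omega), if_neg hk]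
        simp
    · simp
  simpa using LinearMap.congr_fun h y

end reps

theorem stmt18 {W : Type*} [LieRing W] [LieAlgebra ℂ W]
    (B : Module.Basis (ℤ ⊕ ℤ) ℂ W)
    (hLL : ∀ i j : ℤ, ⁅B (Sum.inl i), B (Sum.inl j)⁆ =
        ((i : ℂ) - j) • B (Sum.inl (i + j)))
    (hLI : ∀ i j : ℤ, ⁅B (Sum.inl i), B (Sum.inr j)⁆ =
        ((i : ℂ) - j) • B (Sum.inr (i + j)))
    (hII : ∀ i j : ℤ, ⁅B (Sum.inr i), B (Sum.inr j)⁆ = 0)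
    (θ : W →ₗ[ℂ] W)
    (hθ1 : ∀ i : ℤ, θ (B (Sum.inl i)) = B (Sum.inr i))
    (hθ2 : ∀ i : ℤ, θ (B (Sum.inr i)) = 0) :
    (∀ x : W, ⁅θ x, x⁆ = 0) ∧
    (∀ φ : W →ₗ[ℂ] W, (∀ x : W, ⁅φ x, x⁆ = 0) →
      ∃ c d : ℂ, ∀ x : W, φ x = c • x + d • θ x) := by
  have hIL : ∀ i j : ℤ, ⁅B (Sum.inr i), B (Sum.inl j)⁆ =
      ((i : ℂ) - j) • B (Sum.inr (i + j)) := by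
    intro i j
    rw [← lie_skew, hLI j i, add_comm j i, ← neg_smul]
    congr 1
    ring
  constructor
  · -- θ is commuting
    have stepA : ∀ (t : ℤ ⊕ ℤ) (x : W), ⁅θ x, B t⁆ + ⁅θ (B t), x⁆ = 0 := by
      intro t
      have h : (brR (B t)).comp θ + adL (θ (B t)) = 0 := by
        apply B.ext
        rintro (k | k) <;> rcases t with j | j
        · simp only [LinearMap.add_apply, LinearMap.comp_apply, brR_apply, adL_apply,
            hθ1, hIL, hLI, LinearMap.zero_apply]
          rw [add_comm j k, ← add_smul, show ((k:ℂ) - j) + ((j:ℂ) - k) = 0 by ring,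
            zero_smul]
        · simp [brR, adL, hθ1, hθ2, hII]
        · simp only [LinearMap.add_apply, LinearMap.comp_apply, brR_apply, adL_apply,
            hθ1, hθ2, LinearMap.zero_apply, zero_lie, zero_add]
          exact hII j k
        · simp [brR, adL, hθ2]
      intro x
      simpa using LinearMap.congr_fun h x
    have stepB : ∀ x y : W, ⁅θ x, y⁆ + ⁅θ y, x⁆ = 0 := by
      intro x y
      have h : adL (θ x) + (brR x).comp θ = 0 := by
        apply B.ext
        intro t
        simpa [add_comm] using stepA t x
      simpa [add_comm] using LinearMap.congr_fun h y
    intro x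
    have h2 : (2 : ℂ) • ⁅θ x, x⁆ = 0 := by
      rw [two_smul]; exact stepB x x
    rcases smul_eq_zero.mp h2 with h | h
    · norm_num at h
    · exact h
  · -- classification
    intro φ hφ
    have hpol : ∀ x y : W, ⁅φ x, y⁆ + ⁅φ y, x⁆ = 0 := by
      intro x y
      have h := hφ (x + y)
      rw [map_add, add_lie, lie_add, lie_add, hφ x, hφ y, zero_add, add_zero] at h
      exact h
    have key : ∀ (x y : W) (u : ℤ ⊕ ℤ),
        B.repr ⁅φ x, y⁆ u + B.repr ⁅φ y, x⁆ u = 0 := by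
      intro x y u
      have h := congrArg (fun z => B.repr z u) (hpol x y)
      simpa using h
    have castne : ∀ a b : ℤ, a ≠ b → ((a : ℂ) - b) ≠ 0 := by
      intro a b h
      exact sub_ne_zero.mpr (by exact_mod_cast h)
    have cancel : ∀ c x : ℂ, c ≠ 0 → c * x = 0 → x = 0 := by
      intro c x hc h
      rcases mul_eq_zero.mp h with h | h
      · exact absurd h hc
      · exact h
    -- coefficient equations
    have E1 : ∀ i j m : ℤ,
        ((m : ℂ) - 2*j) * B.repr (φ (B (Sum.inl i))) (Sum.inl (m - j))
        + ((m : ℂ) - 2*i) * B.repr (φ (B (Sum.inl j))) (Sum.inl (m - i)) = 0 := by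
      intro i j m
      have h := key (B (Sum.inl i)) (B (Sum.inl j)) (Sum.inl m)
      rwa [rep1 B hLL hLI j m (φ (B (Sum.inl i))),
        rep1 B hLL hLI i m (φ (B (Sum.inl j)))] at h
    have E2 : ∀ i j m : ℤ,
        ((m : ℂ) - 2*j) * B.repr (φ (B (Sum.inl i))) (Sum.inr (m - j))
        + ((m : ℂ) - 2*i) * B.repr (φ (B (Sum.inl j))) (Sum.inr (m - i)) = 0 := by
      intro i j m
      have h := key (B (Sum.inl i)) (B (Sum.inl j)) (Sum.inr m)
      rwa [rep2 B hLL hLI j m (φ (B (Sum.inl i))),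
        rep2 B hLL hLI i m (φ (B (Sum.inl j)))] at h
    have E3 : ∀ i j m : ℤ,
        ((m : ℂ) - 2*i) * B.repr (φ (B (Sum.inr j))) (Sum.inl (m - i)) = 0 := by
      intro i j m
      have h := key (B (Sum.inl i)) (B (Sum.inr j)) (Sum.inl m)
      rwa [rep3 B hLI hII j m (φ (B (Sum.inl i))),
        rep1 B hLL hLI i m (φ (B (Sum.inr j))), zero_add] at h
    have E4 : ∀ i j m : ℤ,
        ((m : ℂ) - 2*j) * B.repr (φ (B (Sum.inl i))) (Sum.inl (m - j))
        + ((m : ℂ) - 2*i) * B.repr (φ (B (Sum.inr j))) (Sum.inr (m - i)) = 0 := by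
      intro i j m
      have h := key (B (Sum.inl i)) (B (Sum.inr j)) (Sum.inr m)
      rwa [rep4 B hLI hII j m (φ (B (Sum.inl i))),
        rep2 B hLL hLI i m (φ (B (Sum.inr j)))] at h
    -- derived coefficient facts
    have hfL0 : ∀ i k : ℤ, k ≠ i → B.repr (φ (B (Sum.inl i))) (Sum.inl k) = 0 := by
      intro i k hk
      have h := E1 i i (k + i)
      rw [show k + i - i = k from by omega] at h
      push_cast at h
      refine cancel ((k : ℂ) - i) _ (castne k i hk) ?_
      linear_combination h / 2
    have hgL0 : ∀ i k : ℤ, k ≠ i → B.repr (φ (B (Sum.inl i))) (Sum.inr k) = 0 := by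
      intro i k hk
      have h := E2 i i (k + i)
      rw [show k + i - i = k from by omega] at h
      push_cast at h
      refine cancel ((k : ℂ) - i) _ (castne k i hk) ?_
      linear_combination h / 2
    have hcL : ∀ i : ℤ,
        B.repr (φ (B (Sum.inl i))) (Sum.inl i) = B.repr (φ (B (Sum.inl 0))) (Sum.inl 0) := by
      intro i
      by_cases hi : i = 0
      · subst hi; rfl
      · have h := E1 i 0 i
        rw [show i - (0:ℤ) = i from by omega, show i - i = 0 from by omega] at h
        push_cast at h
        refine sub_eq_zero.mp (cancel (i : ℂ) _ (Int.cast_ne_zero.mpr hi) ?_)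
        linear_combination h
    have hcg : ∀ i : ℤ,
        B.repr (φ (B (Sum.inl i))) (Sum.inr i) = B.repr (φ (B (Sum.inl 0))) (Sum.inr 0) := by
      intro i
      by_cases hi : i = 0
      · subst hi; rfl
      · have h := E2 i 0 i
        rw [show i - (0:ℤ) = i from by omega, show i - i = 0 from by omega] at h
        push_cast at h
        refine sub_eq_zero.mp (cancel (i : ℂ) _ (Int.cast_ne_zero.mpr hi) ?_)
        linear_combination h
    have hfI : ∀ j k : ℤ, B.repr (φ (B (Sum.inr j))) (Sum.inl k) = 0 := by
      intro j k
      have h := E3 (k + 1) j (2*k + 1)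
      rw [show 2*k + 1 - (k + 1) = k from by omega] at h
      push_cast at h
      linear_combination -h
    have hgI0 : ∀ j k : ℤ, k ≠ j → B.repr (φ (B (Sum.inr j))) (Sum.inr k) = 0 := by
      intro j k hk
      have h := E4 (k - 1) j (2*k - 1)
      rw [show 2*k - 1 - (k - 1) = k from by omega] at h
      rw [hfL0 (k - 1) (2*k - 1 - j) (by omega)] at h
      push_cast at h
      linear_combination h
    have hgIc : ∀ j : ℤ,
        B.repr (φ (B (Sum.inr j))) (Sum.inr j) = B.repr (φ (B (Sum.inl 0))) (Sum.inl 0) := by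
      intro j
      have h := E4 (j + 1) j (2*j + 1)
      rw [show 2*j + 1 - j = j + 1 from by omega, show 2*j + 1 - (j + 1) = j from by omega,
        hcL (j + 1)] at h
      push_cast at h
      linear_combination -h
    set c : ℂ := B.repr (φ (B (Sum.inl 0))) (Sum.inl 0) with hc
    set d : ℂ := B.repr (φ (B (Sum.inl 0))) (Sum.inr 0) with hd
    refine ⟨c, d, ?_⟩
    have hmain : φ = c • (LinearMap.id : W →ₗ[ℂ] W) + d • θ := by
      apply B.ext
      rintro (i | i)
      · apply B.repr.injective
        ext u
        rcases u with k | k <;>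
          simp only [map_add, map_smul, LinearMap.add_apply, LinearMap.smul_apply,
            LinearMap.id_apply, hθ1, Module.Basis.repr_self, Finsupp.coe_add, Finsupp.coe_smul,
            Pi.add_apply, Pi.smul_apply, smul_eq_mul, Finsupp.single_apply,
            Sum.inl.injEq, Sum.inr.injEq, reduceCtorEq, if_false, mul_zero,
            add_zero, zero_add, mul_ite, mul_one]
        · by_cases hk : k = i
          · subst hk; rw [if_pos rfl]; exact hcL k
          · rw [if_neg (fun hh => hk hh.symm)]; exact hfL0 i k hk
        · by_cases hk : k = i
          · subst hk; rw [if_pos rfl]; exact hcg k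
          · rw [if_neg (fun hh => hk hh.symm)]; exact hgL0 i k hk
      · apply B.repr.injective
        ext u
        rcases u with k | k <;>
          simp only [map_add, map_smul, LinearMap.add_apply, LinearMap.smul_apply,
            LinearMap.id_apply, hθ2, Module.Basis.repr_self, map_zero, smul_zero,
            Finsupp.coe_add, Finsupp.coe_smul, Finsupp.coe_zero, Pi.zero_apply,
            Pi.add_apply, Pi.smul_apply, smul_eq_mul, Finsupp.single_apply,
            Sum.inl.injEq, Sum.inr.injEq, reduceCtorEq, if_false, mul_zero,
            add_zero, zero_add, mul_ite, mul_one]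
        · exact hfI i k
        · by_cases hk : k = i
          · subst hk; rw [if_pos rfl]; exact hgIc k
          · rw [if_neg (fun hh => hk hh.symm)]; exact hgI0 i k hk
    intro x
    have := LinearMap.congr_fun hmain x
    simpa using this
end

section
/- Every commutative post-Lie algebra structure on the Witt algebra is trivial, and every commutative post-Lie algebra structure on the Virasoro algebra is trivial. -/
private lemma key19 (a : ℤ → ℤ → ℤ → ℂ)
    (hS : ∀ p q j : ℤ, a p q j = a q p j)
    (hD : ∀ p m n j : ℤ, ((m:ℂ) - (n:ℂ)) * a p (m+n) j
      = ((j:ℂ) - 2*(n:ℂ)) * a p m (j-n) + (2*(m:ℂ) - (j:ℂ)) * a p n (j-m)) :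
    ∀ p q j : ℤ, a p q j = 0 := by
  have cne : ∀ {x y : ℤ}, x ≠ y → ((x:ℂ) - (y:ℂ)) ≠ 0 := fun h =>
    sub_ne_zero.mpr (fun hc => h (by exact_mod_cast hc))
  have star : ∀ p n j : ℤ, ((j:ℂ) - (n:ℂ)) * a p n j
      = ((j:ℂ) - 2*(n:ℂ)) * a p 0 (j-n) := by
    intro p n j
    have h := hD p 0 n j
    rw [zero_add, sub_zero] at h
    push_cast at h
    linear_combination h
  have E : ∀ p n j : ℤ, ((j:ℂ)-(p:ℂ))*((j:ℂ)-2*(n:ℂ)) * a p 0 (j-n)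
      = ((j:ℂ)-(n:ℂ))*((j:ℂ)-2*(p:ℂ)) * a n 0 (j-p) := by
    intro p n j
    linear_combination (-((j:ℂ)-(p:ℂ))) * star p n j + ((j:ℂ)-(n:ℂ)) * star n p j
      + ((j:ℂ)-(p:ℂ))*((j:ℂ)-(n:ℂ)) * hS p n j
  have dstar : ∀ p s : ℤ, ((s:ℂ) - (p:ℂ)) * a p 0 s
      = ((s:ℂ) - 2*(p:ℂ)) * a 0 0 (s-p) := by
    intro p s
    have h := star 0 p s
    push_cast at h
    linear_combination h + ((s:ℂ)-(p:ℂ)) * hS p 0 s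
  have czero : ∀ k : ℤ, k ≠ 0 → a 0 0 k = 0 := by
    intro k hk
    have hkc : (k:ℂ) ≠ 0 := by exact_mod_cast hk
    have hE := E k (2*k) (4*k)
    have h1 : (4*k - 2*k : ℤ) = 2*k := by ring
    have h2 : (4*k - k : ℤ) = 3*k := by ring
    rw [h1, h2] at hE
    push_cast at hE
    have h2k : ((2:ℂ)*k) ≠ 0 := mul_ne_zero two_ne_zero hkc
    have h4 : ((2:ℂ)*k) * (((2:ℂ)*k) * a (2*k) 0 (3*k)) = 0 := by linear_combination -hE
    have hb : a (2*k) 0 (3*k) = 0 := by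
      have h5 := (mul_eq_zero.mp h4).resolve_left h2k
      exact (mul_eq_zero.mp h5).resolve_left h2k
    have hd := dstar (2*k) (3*k)
    have h3 : (3*k - 2*k : ℤ) = k := by ring
    rw [h3, hb, mul_zero] at hd
    push_cast at hd
    have hkey : (-(k:ℂ)) * a 0 0 k = 0 := by linear_combination hd.symm
    exact (mul_eq_zero.mp hkey).resolve_left (neg_ne_zero.mpr hkc)
  have beta : ∀ p n : ℤ, n ≠ p → (n:ℂ) * a p 0 p + (p:ℂ) * a n 0 n = 0 := by
    intro p n hnp
    have hE := E p n (n+p)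
    have h1 : (n+p-n : ℤ) = p := by ring
    have h2 : (n+p-p : ℤ) = n := by ring
    rw [h1, h2] at hE
    push_cast at hE
    have h3 : ((n:ℂ) - (p:ℂ)) * ((n:ℂ) * a p 0 p + (p:ℂ) * a n 0 n) = 0 := by
      linear_combination -hE
    exact (mul_eq_zero.mp h3).resolve_left (cne hnp)
  have beta1 : a 1 0 1 = 0 := by
    have h12 := beta 2 1 (by norm_num)
    have h13 := beta 3 1 (by norm_num)
    have h23 := beta 3 2 (by norm_num)
    push_cast at h12 h13 h23
    linear_combination (1/4 : ℂ) * h12 + (1/6 : ℂ) * h13 - (1/12 : ℂ) * h23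
  have betall : ∀ p : ℤ, a p 0 p = 0 := by
    intro p
    by_cases hp : p = 1
    · rw [hp]; exact beta1
    · have h := beta p 1 (fun h' => hp h'.symm)
      rw [beta1, mul_zero, add_zero, Int.cast_one, one_mul] at h
      exact h
  have bzero : ∀ p s : ℤ, a p 0 s = 0 := by
    intro p s
    by_cases hsp : s = p
    · rw [hsp]; exact betall p
    · have hd := dstar p s
      rw [czero (s - p) (sub_ne_zero.mpr hsp), mul_zero] at hd
      exact (mul_eq_zero.mp hd).resolve_left (cne hsp)
  have offd : ∀ p n j : ℤ, j ≠ n → a p n j = 0 := by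
    intro p n j hjn
    have h := star p n j
    rw [bzero p (j-n), mul_zero] at h
    exact (mul_eq_zero.mp h).resolve_left (cne hjn)
  have aqq : ∀ p q : ℤ, q ≠ p → a p q q = 0 := by
    intro p q hqp
    rw [hS p q q]
    exact offd q p q hqp
  have diag : ∀ p : ℤ, a p p p = 0 := by
    intro p
    set t : ℤ := if p = -1 then -2 else p + 1 with ht
    have htp : t ≠ p := by rw [ht]; split <;> omega
    have ht0 : t ≠ 0 := by rw [ht]; split <;> omega
    have h := hD p p t (p + t)
    have e1 : (p + t - t : ℤ) = p := by ring
    have e2 : (p + t - p : ℤ) = t := by ring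
    rw [e1, e2] at h
    rw [aqq p (p+t) (by omega), aqq p t htp] at h
    push_cast at h
    have h' : ((p:ℂ) - (t:ℂ)) * a p p p = 0 := by linear_combination -h
    exact (mul_eq_zero.mp h').resolve_left (cne (fun hh => htp hh.symm))
  intro p q j
  by_cases hjq : j = q
  · rw [hjq]
    by_cases hqp : q = p
    · rw [hqp]; exact diag p
    · exact aqq p q hqp
  · exact offd p q j hjq

/-- `f` is a commutative post-Lie algebra structure on the Lie algebra `L`. -/
def IsCommPostLie {L : Type*} [LieRing L] [LieAlgebra ℂ L]
    (f : L →ₗ[ℂ] L →ₗ[ℂ] L) : Prop :=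
  (∀ x y : L, f x y = f y x) ∧
  (∀ x y z : L, f ⁅x, y⁆ z = f x (f y z) - f y (f x z)) ∧
  (∀ x y z : L, f x ⁅y, z⁆ = ⁅f x y, z⁆ + ⁅y, f x z⁆)

theorem stmt19 {W : Type*} [LieRing W] [LieAlgebra ℂ W]
    (B : Module.Basis ℤ ℂ W)
    (hB : ∀ m n : ℤ, ⁅B m, B n⁆ = ((m : ℂ) - n) • B (m + n))
    {V : Type*} [LieRing V] [LieAlgebra ℂ V]
    (B' : Module.Basis (Option ℤ) ℂ V)
    (hC : ∀ x : V, ⁅B' none, x⁆ = 0)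
    (hL : ∀ m n : ℤ, ⁅B' (some m), B' (some n)⁆ =
        ((m : ℂ) - n) • B' (some (m + n)) +
        (if m + n = 0 then ((m : ℂ)^3 - m)/12 else 0) • B' none)
    (f : W →ₗ[ℂ] W →ₗ[ℂ] W) (hf : IsCommPostLie f)
    (g : V →ₗ[ℂ] V →ₗ[ℂ] V) (hg : IsCommPostLie g) :
    f = 0 ∧ g = 0 := by
  obtain ⟨fS, fA2, fA3⟩ := hf
  obtain ⟨gS, gA2, gA3⟩ := hg
  -- coefficient formula for the Witt bracket
  have W1 : ∀ (n j : ℤ) (x : W), B.repr ⁅B n, x⁆ j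
      = (2*(n:ℂ) - (j:ℂ)) * B.repr x (j - n) := by
    intro n j
    have hmap : ((Finsupp.lapply j).comp (B.repr.toLinearMap.comp
          ((LieAlgebra.ad ℂ W (B n)) : W →ₗ[ℂ] W)))
        = (2*(n:ℂ) - (j:ℂ)) • ((Finsupp.lapply (j-n)).comp B.repr.toLinearMap) := by
      apply B.ext
      intro k
      simp only [LinearMap.comp_apply, LinearMap.smul_apply, LieAlgebra.ad_apply,
        LinearEquiv.coe_toLinearMap, Finsupp.lapply_apply, hB n k, map_smul,
        Module.Basis.repr_self, Finsupp.smul_apply, Finsupp.single_apply, smul_eq_mul]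
      by_cases hk : k = j - n
      · rw [if_pos (by omega), if_pos hk]
        push_cast [hk]
        ring
      · rw [if_neg (by omega), if_neg hk]
        ring
    intro x
    have hx := LinearMap.congr_fun hmap x
    simpa using hx
  -- Witt coefficients
  set A : ℤ → ℤ → ℤ → ℂ := fun p q j => B.repr (f (B p) (B q)) j with hA
  have hSf : ∀ p q j : ℤ, A p q j = A q p j := by
    intro p q j
    simp only [hA, fS (B p) (B q)]
  have hDf : ∀ p m n j : ℤ, ((m:ℂ) - (n:ℂ)) * A p (m+n) j
      = ((j:ℂ) - 2*(n:ℂ)) * A p m (j-n) + (2*(m:ℂ) - (j:ℂ)) * A p n (j-m) := by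
    intro p m n j
    have h := fA3 (B p) (B m) (B n)
    rw [hB m n, map_smul, ← lie_skew (f (B p) (B m)) (B n)] at h
    have h2 := congrArg (fun v => B.repr v j) h
    simp only [map_add, map_neg, map_smul, Finsupp.add_apply, Finsupp.neg_apply,
      Finsupp.smul_apply, smul_eq_mul] at h2
    rw [W1 n j, W1 m j] at h2
    linear_combination h2
  have hAf := key19 A hSf hDf
  have hfpq : ∀ p q : ℤ, f (B p) (B q) = 0 := by
    intro p q
    apply B.repr.injective
    rw [map_zero]
    ext j
    exact hAf p q j
  have hf0 : f = 0 := by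
    refine B.ext fun p => ?_
    refine B.ext fun q => ?_
    rw [hfpq p q]
    simp
  -- Virasoro part
  have hCx : ∀ x : V, ⁅x, B' none⁆ = 0 := by
    intro x
    rw [← lie_skew x (B' none), hC, neg_zero]
  have V1s : ∀ (n j : ℤ) (x : V), B'.repr ⁅B' (some n), x⁆ (some j)
      = (2*(n:ℂ) - (j:ℂ)) * B'.repr x (some (j - n)) := by
    intro n j
    have hmap : ((Finsupp.lapply (some j)).comp (B'.repr.toLinearMap.comp
          ((LieAlgebra.ad ℂ V (B' (some n))) : V →ₗ[ℂ] V)))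
        = (2*(n:ℂ) - (j:ℂ)) • ((Finsupp.lapply (some (j-n))).comp B'.repr.toLinearMap) := by
      apply B'.ext
      intro k
      simp only [LinearMap.comp_apply, LinearMap.smul_apply, LieAlgebra.ad_apply,
        LinearEquiv.coe_toLinearMap, Finsupp.lapply_apply, Module.Basis.repr_self,
        Finsupp.smul_apply, Finsupp.single_apply, smul_eq_mul]
      cases k with
      | none =>
        rw [hCx (B' (some n))]
        simp
      | some k =>
        rw [hL n k]
        simp only [map_add, map_smul, Module.Basis.repr_self, Finsupp.add_apply,
          Finsupp.smul_apply, Finsupp.single_apply, smul_eq_mul]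
        rw [if_neg (show ¬((none : Option ℤ) = some j) from by simp)]
        by_cases hk : k = j - n
        · rw [if_pos (show (some (n+k) : Option ℤ) = some j from by
              simp only [Option.some.injEq]; omega),
            if_pos (show (some k : Option ℤ) = some (j-n) from by
              simp only [Option.some.injEq]; omega)]
          push_cast [hk]
          ring
        · rw [if_neg (show ¬((some (n+k) : Option ℤ) = some j) from by
              simp only [Option.some.injEq]; omega),
            if_neg (show ¬((some k : Option ℤ) = some (j-n)) from by
              simp only [Option.some.injEq]; omega)]
          ring
    intro x
    have hx := LinearMap.congr_fun hmap x
    simpa using hx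
  have V1n : ∀ (n : ℤ) (x : V), B'.repr ⁅B' (some n), x⁆ none
      = (((n:ℂ)^3 - (n:ℂ))/12) * B'.repr x (some (-n)) := by
    intro n
    have hmap : ((Finsupp.lapply (none : Option ℤ)).comp (B'.repr.toLinearMap.comp
          ((LieAlgebra.ad ℂ V (B' (some n))) : V →ₗ[ℂ] V)))
        = (((n:ℂ)^3 - (n:ℂ))/12) • ((Finsupp.lapply (some (-n))).comp B'.repr.toLinearMap) := by
      apply B'.ext
      intro k
      simp only [LinearMap.comp_apply, LinearMap.smul_apply, LieAlgebra.ad_apply,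
        LinearEquiv.coe_toLinearMap, Finsupp.lapply_apply, Module.Basis.repr_self,
        Finsupp.smul_apply, Finsupp.single_apply, smul_eq_mul]
      cases k with
      | none =>
        rw [hCx (B' (some n))]
        simp
      | some k =>
        rw [hL n k]
        simp only [map_add, map_smul, Module.Basis.repr_self, Finsupp.add_apply,
          Finsupp.smul_apply, Finsupp.single_apply, smul_eq_mul]
        simp only [show ((some (n+k) : Option ℤ) = none) = False from by simp,
          eq_self_iff_true, if_true, if_false, mul_zero, zero_add, mul_one]
        by_cases hk : k = -n
        · rw [if_pos (show n + k = 0 from by omega),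
            if_pos (show (some k : Option ℤ) = some (-n) from by
              simp only [Option.some.injEq]; omega)]
          ring
        · rw [if_neg (show ¬(n + k = 0) from by omega),
            if_neg (show ¬((some k : Option ℤ) = some (-n)) from by
              simp only [Option.some.injEq]; omega)]
          ring
    intro x
    have hx := LinearMap.congr_fun hmap x
    simpa using hx
  -- g x C has no L-components
  have hgb : ∀ (n : ℤ) (x : V), ⁅B' (some n), g x (B' none)⁆ = 0 := by
    intro n x
    have h := gA3 x (B' (some n)) (B' none)
    rw [hCx (B' (some n)), hCx (g x (B' (some n))), map_zero, zero_add] at h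
    exact h.symm
  have gxCs : ∀ (x : V) (k : ℤ), B'.repr (g x (B' none)) (some k) = 0 := by
    intro x k
    have h := V1s (k+1) (2*k+1) (g x (B' none))
    rw [hgb (k+1) x, show (2*k+1-(k+1) : ℤ) = k from by ring, map_zero] at h
    simp only [Finsupp.coe_zero, Pi.zero_apply] at h
    have h2 : (0:ℂ) = (2*((k:ℂ)+1) - (2*(k:ℂ)+1)) * B'.repr (g x (B' none)) (some k) := by
      push_cast at h ⊢
      linear_combination h
    have h3 : (2*((k:ℂ)+1) - (2*(k:ℂ)+1)) = 1 := by ring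
    rw [h3, one_mul] at h2
    exact h2.symm
  -- Virasoro L-coefficients
  set A' : ℤ → ℤ → ℤ → ℂ := fun p q j => B'.repr (g (B' (some p)) (B' (some q))) (some j)
    with hA'
  have hSg : ∀ p q j : ℤ, A' p q j = A' q p j := by
    intro p q j
    simp only [hA', gS (B' (some p)) (B' (some q))]
  have hDg : ∀ p m n j : ℤ, ((m:ℂ) - (n:ℂ)) * A' p (m+n) j
      = ((j:ℂ) - 2*(n:ℂ)) * A' p m (j-n) + (2*(m:ℂ) - (j:ℂ)) * A' p n (j-m) := by
    intro p m n j
    have h := gA3 (B' (some p)) (B' (some m)) (B' (some n))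
    rw [hL m n, map_add, map_smul, map_smul,
      ← lie_skew (g (B' (some p)) (B' (some m))) (B' (some n))] at h
    have h2 := congrArg (fun v => B'.repr v (some j)) h
    simp only [map_add, map_neg, map_smul, Finsupp.add_apply, Finsupp.neg_apply,
      Finsupp.smul_apply, smul_eq_mul] at h2
    rw [V1s n j, V1s m j, gxCs (B' (some p)) j, mul_zero, add_zero] at h2
    linear_combination h2
  have hAg := key19 A' hSg hDg
  -- none-coefficients
  have hT : ∀ p m n : ℤ, ((m:ℂ) - (n:ℂ)) * B'.repr (g (B' (some p)) (B' (some (m+n)))) none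
      + (if m + n = 0 then ((m:ℂ)^3 - (m:ℂ))/12 else 0)
        * B'.repr (g (B' (some p)) (B' none)) none = 0 := by
    intro p m n
    have h := gA3 (B' (some p)) (B' (some m)) (B' (some n))
    rw [hL m n, map_add, map_smul, map_smul,
      ← lie_skew (g (B' (some p)) (B' (some m))) (B' (some n))] at h
    have h2 := congrArg (fun v => B'.repr v none) h
    simp only [map_add, map_neg, map_smul, Finsupp.add_apply, Finsupp.neg_apply,
      Finsupp.smul_apply, smul_eq_mul] at h2
    rw [V1n n, V1n m] at h2
    have e1 : B'.repr (g (B' (some p)) (B' (some m))) (some (-n)) = 0 := hAg p m (-n)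
    have e2 : B'.repr (g (B' (some p)) (B' (some n))) (some (-m)) = 0 := hAg p n (-m)
    rw [e1, e2, mul_zero, mul_zero, neg_zero, add_zero] at h2
    linear_combination h2
  have hTz : ∀ p q : ℤ, B'.repr (g (B' (some p)) (B' (some q))) none = 0 := by
    intro p q
    by_cases hq : q = 0
    · have h := hT p 1 (-1)
      rw [show ((1:ℤ) + -1) = 0 from by norm_num, if_pos rfl] at h
      norm_num at h
      rw [hq]
      exact h
    · have h := hT p q 0
      rw [add_zero, if_neg hq] at h
      push_cast at h
      have hqc : (q:ℂ) ≠ 0 := by exact_mod_cast hq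
      have h' : (q:ℂ) * B'.repr (g (B' (some p)) (B' (some q))) none = 0 := by
        linear_combination h
      exact (mul_eq_zero.mp h').resolve_left hqc
  have hτ : ∀ p : ℤ, B'.repr (g (B' (some p)) (B' none)) none = 0 := by
    intro p
    have h := hT p 2 (-2)
    rw [show ((2:ℤ) + -2) = 0 from by norm_num, if_pos rfl, hTz p 0] at h
    norm_num at h
    exact h
  have gLL : ∀ p q : ℤ, g (B' (some p)) (B' (some q)) = 0 := by
    intro p q
    apply B'.repr.injective
    rw [map_zero]
    ext k
    cases k with
    | none => exact hTz p q
    | some j => exact hAg p q j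
  have gLC : ∀ p : ℤ, g (B' (some p)) (B' none) = 0 := by
    intro p
    apply B'.repr.injective
    rw [map_zero]
    ext k
    cases k with
    | none => exact hτ p
    | some j => exact gxCs (B' (some p)) j
  have gCL : ∀ q : ℤ, g (B' none) (B' (some q)) = 0 := by
    intro q
    rw [gS (B' none) (B' (some q))]
    exact gLC q
  have gCC : g (B' none) (B' none) = 0 := by
    have h := gA3 (B' none) (B' (some 2)) (B' (some (-2)))
    rw [hL 2 (-2), show ((2:ℤ) + -2) = 0 from by norm_num, map_add, map_smul, map_smul,
      gCL 2, gCL (-2), gCL 0, zero_lie, lie_zero, add_zero] at h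
    simp only [smul_zero, zero_add, add_zero] at h
    norm_num at h
    exact h
  have hg0 : g = 0 := by
    refine B'.ext fun i => ?_
    refine B'.ext fun i' => ?_
    have : g (B' i) (B' i') = 0 := by
      cases i with
      | none => cases i' with
        | none => exact gCC
        | some q => exact gCL q
      | some p => cases i' with
        | none => exact gLC p
        | some q => exact gLL p q
    rw [this]
    simp
  exact ⟨hf0, hg0⟩
end
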